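/- arXiv:2206.14864 — 5 statements merged into one kernel-verified Lean document; each statement's English description precedes it below -/
import Mathlib

section
/- Let X be a Polish space and V a normed C_b(X)-module. If v_1, …, v_n ∈ V have disjoint supports, i.e. there exist pairwise disjoint closed sets C_1, …, C_n ⊆ X with supp v_i ⊆ C_i for every i, then ‖v_1 + ⋯ + v_n‖ = max_i ‖v_i‖. -/
/-!
Separate the `C i` by pairwise disjoint open sets `W i` and take Urysohn functions `h i` with
values in `[0, 1]`, equal to `1` near `C i` and supported in `W i`. Then `h i • v i = v i` and
`h i • v j = 0` for `j ≠ i`. Hence `∑ v j = ∑ h j • v j` has norm at most `max ‖v j‖` by the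
defining inequality of a normed `C_b(X)`-module, while `v i = h i • ∑ v j` gives
`‖v i‖ ≤ ‖∑ v j‖`.
-/

open BoundedContinuousFunction Filter Topology Set MeasureTheory

noncomputable section

/-- The local seminorm `‖v‖_{|A}` on an (algebraic) `C_b(X)`-module. -/
def locNormCb {X : Type*} [TopologicalSpace X] {V : Type*} [NormedAddCommGroup V]
    [Module (X →ᵇ ℝ) V] (A : Set X) (v : V) : ℝ :=
  sSup {r : ℝ | ∃ f : X →ᵇ ℝ, tsupport ⇑f ⊆ A ∧ ‖f‖ ≤ 1 ∧ r = ‖f • v‖}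

/-- The compatibility inequality defining a normed `C_b(X)`-module:
`‖f_1 v_1 + ⋯ + f_n v_n‖ ≤ (max_i ‖f_i‖)·(max_i ‖v_i‖)` for `f_i` with pairwise
disjoint supports. -/
def CbNormSMulCompat (X : Type*) [TopologicalSpace X] (V : Type*) [NormedAddCommGroup V]
    [Module (X →ᵇ ℝ) V] : Prop :=
  ∀ (s : Finset ℕ) (f : ℕ → X →ᵇ ℝ) (v : ℕ → V) (M K : ℝ), 0 ≤ M → 0 ≤ K →
    ((s : Set ℕ).Pairwise fun i j => Disjoint (tsupport ⇑(f i)) (tsupport ⇑(f j))) →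
    (∀ i ∈ s, ‖f i‖ ≤ M) → (∀ i ∈ s, ‖v i‖ ≤ K) →
    ‖∑ i ∈ s, f i • v i‖ ≤ M * K

/-- The action of constant functions agrees with the real scalar multiplication. -/
def CbConstSMulCompat (X : Type*) [TopologicalSpace X] (V : Type*) [NormedAddCommGroup V]
    [NormedSpace ℝ V] [Module (X →ᵇ ℝ) V] : Prop :=
  ∀ (c : ℝ) (v : V), const X c • v = c • v

open Function

section Topology

variable {X : Type*} [TopologicalSpace X] [NormalSpace X]

theorem exists_isOpen_superset_pairwise_disjoint {ι : Type*} [Finite ι] {C : ι → Set X}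
    (hC : ∀ i, IsClosed (C i)) (hdisj : Pairwise (Disjoint on C)) :
    ∃ W : ι → Set X, (∀ i, IsOpen (W i)) ∧ (∀ i, C i ⊆ W i) ∧ Pairwise (Disjoint on W) := by
  set D : ι → Set X := fun i => ⋃ j ≠ i, C j
  have hC_D : ∀ i j, j ≠ i → C i ⊆ D j := fun i j hji =>
    subset_iUnion₂ (s := fun k (_ : k ≠ j) => C k) i hji.symm
  have hC_compl : ∀ i, C i ⊆ (D i)ᶜ := fun i => by
    simp only [D, subset_compl_iff_disjoint_right, disjoint_iUnion_right]
    exact fun j hji => hdisj hji.symm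
  -- Each `C i` gets a neighbourhood whose closure avoids the other `C j`; removing those closures
  -- makes the neighbourhoods pairwise disjoint.
  choose O hO hCO hOD using fun i =>
    normal_exists_closure_subset (hC i)
      (isClosed_iUnion_of_finite fun j => isClosed_iUnion_of_finite fun _ => hC j).isOpen_compl
      (hC_compl i)
  refine ⟨fun i => O i \ ⋃ j ≠ i, closure (O j), fun i => ?_, fun i => ?_, fun i j hij => ?_⟩
  · exact (hO i).sdiff (isClosed_iUnion_of_finite fun j =>
      isClosed_iUnion_of_finite fun _ => isClosed_closure)
  · refine subset_sdiff.mpr ⟨hCO i, ?_⟩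
    simp only [disjoint_iUnion_right]
    exact fun j hji => (subset_compl_iff_disjoint_left.mp (hOD j)).mono_left (hC_D i j hji)
  · exact disjoint_left.mpr fun x hx hx' => hx'.2 (mem_iUnion₂.mpr ⟨i, hij, subset_closure hx.1⟩)

theorem exists_bump_of_isClosed_subset_isOpen {C U : Set X} (hC : IsClosed C) (hU : IsOpen U)
    (hCU : C ⊆ U) :
    ∃ h : X →ᵇ ℝ, ‖h‖ ≤ 1 ∧ ‖1 - h‖ ≤ 1 ∧ tsupport h ⊆ U ∧ tsupport ⇑(1 - h) ⊆ Cᶜ := by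
  obtain ⟨O, hO, hCO, hOU⟩ := normal_exists_closure_subset hC hU hCU
  obtain ⟨O', hO', hCO', hO'O⟩ := normal_exists_closure_subset hC hO hCO
  obtain ⟨h, h_zero, h_one, h_mem⟩ := exists_bounded_zero_one_of_closed hO.isClosed_compl
    isClosed_closure (disjoint_compl_left.mono_right hO'O)
  have h_supp : support h ⊆ O := fun x hx => not_not.mp fun hxO => hx (h_zero hxO)
  have h_supp' : support ⇑(1 - h) ⊆ O'ᶜ := fun x hx hxO' => hx <| by
    simp [h_one (subset_closure hxO')]
  refine ⟨h, ?_, ?_, (closure_mono h_supp).trans hOU,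
    (closure_minimal h_supp' hO'.isClosed_compl).trans (compl_subset_compl.mpr hCO')⟩ <;>
  refine (norm_le zero_le_one).mpr fun x => ?_ <;>
  simp only [coe_sub, coe_one, Pi.sub_apply, Pi.one_apply, Real.norm_eq_abs, abs_le] <;>
  constructor <;> linarith [(h_mem x).1, (h_mem x).2]

end Topology

section Module

variable {X : Type*} [TopologicalSpace X] {V : Type*} [NormedAddCommGroup V]
  [Module (X →ᵇ ℝ) V]

theorem CbNormSMulCompat.norm_smul_le (hnorm : CbNormSMulCompat X V) (f : X →ᵇ ℝ) (v : V) :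
    ‖f • v‖ ≤ ‖f‖ * ‖v‖ := by
  simpa using hnorm {0} (fun _ => f) (fun _ => v) ‖f‖ ‖v‖ (norm_nonneg f) (norm_nonneg v)
    (by simp) (fun _ _ => le_rfl) (fun _ _ => le_rfl)

theorem CbNormSMulCompat.norm_sum_smul_le (hnorm : CbNormSMulCompat X V) {ι : Type*} [Fintype ι]
    (f : ι → X →ᵇ ℝ) (v : ι → V) (hf : Pairwise (Disjoint on fun i => tsupport (f i)))
    (hf_norm : ∀ i, ‖f i‖ ≤ 1) :
    ‖∑ i, f i • v i‖ ≤ ⨆ i, ‖v i‖ := by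
  obtain ⟨e, he⟩ := Countable.exists_injective_nat ι
  have hv_le : ∀ i, ‖v i‖ ≤ ⨆ i, ‖v i‖ := le_ciSup (Set.finite_range _).bddAbove
  have key := hnorm (Finset.univ.map ⟨e, he⟩) (extend e f 0) (extend e v 0) 1 (⨆ i, ‖v i‖)
    zero_le_one (Real.iSup_nonneg fun i => norm_nonneg _) ?_ ?_ ?_
  · simpa [he.extend_apply] using key
  · simp only [Finset.coe_map, Embedding.coeFn_mk, Finset.coe_univ, image_univ]
    rintro _ ⟨i, rfl⟩ _ ⟨j, rfl⟩ hij
    simpa [he.extend_apply] using hf (ne_of_apply_ne e hij)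
  · simpa [he.extend_apply] using hf_norm
  · simpa [he.extend_apply] using hv_le

theorem CbNormSMulCompat.smul_eq_zero_of_locNormCb_eq_zero (hnorm : CbNormSMulCompat X V)
    {A : Set X} {v : V} (hv : locNormCb A v = 0) {f : X →ᵇ ℝ} (hf : tsupport f ⊆ A)
    (hf_norm : ‖f‖ ≤ 1) : f • v = 0 := by
  have hbdd : BddAbove {r : ℝ | ∃ f : X →ᵇ ℝ, tsupport ⇑f ⊆ A ∧ ‖f‖ ≤ 1 ∧ r = ‖f • v‖} :=
    ⟨‖v‖, by
      rintro _ ⟨g, -, hg, rfl⟩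
      exact (hnorm.norm_smul_le g v).trans (mul_le_of_le_one_left (norm_nonneg v) hg)⟩
  have := le_csSup hbdd ⟨f, hf, hf_norm, rfl⟩
  rw [← locNormCb, hv] at this
  exact norm_le_zero_iff.mp this

end Module

theorem statement0_general {X : Type*} [MetricSpace X]
    {V : Type*} [NormedAddCommGroup V] [Module (X →ᵇ ℝ) V]
    (hnorm : CbNormSMulCompat X V)
    (n : ℕ) (v : Fin n → V) (C : Fin n → Set X)
    (hC : ∀ i, IsClosed (C i)) (hdisj : Pairwise (Function.onFun Disjoint C))
    (hsupp : ∀ i, locNormCb (C i)ᶜ (v i) = 0) :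
    ‖∑ i, v i‖ = ⨆ i, ‖v i‖ := by
  obtain ⟨W, hW, hCW, hW_disj⟩ := exists_isOpen_superset_pairwise_disjoint hC hdisj
  choose h h_norm h_norm' h_supp h_supp' using fun i =>
    exists_bump_of_isClosed_subset_isOpen (hC i) (hW i) (hCW i)
  have h_smul_self : ∀ i, h i • v i = v i := fun i => by
    have := hnorm.smul_eq_zero_of_locNormCb_eq_zero (hsupp i) (h_supp' i) (h_norm' i)
    rwa [sub_smul, one_smul, sub_eq_zero, eq_comm] at this
  have h_smul_sum : ∀ i, h i • ∑ j, v j = v i := fun i => by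
    rw [Finset.smul_sum, Finset.sum_eq_single i _ (by simp), h_smul_self]
    intro j _ hji
    refine hnorm.smul_eq_zero_of_locNormCb_eq_zero (hsupp j) ?_ (h_norm i)
    exact (h_supp i).trans ((hW_disj hji.symm).subset_compl_right.trans
      (compl_subset_compl.mpr (hCW j)))
  refine le_antisymm ?_ (Real.iSup_le (fun i => ?_) (norm_nonneg _))
  · calc ‖∑ i, v i‖ = ‖∑ i, h i • v i‖ := by simp only [h_smul_self]
      _ ≤ ⨆ i, ‖v i‖ := hnorm.norm_sum_smul_le h v
          (fun i j hij => (hW_disj hij).mono (h_supp i) (h_supp j)) h_norm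
  · calc ‖v i‖ = ‖h i • ∑ j, v j‖ := by rw [h_smul_sum]
      _ ≤ ‖h i‖ * ‖∑ j, v j‖ := hnorm.norm_smul_le _ _
      _ ≤ ‖∑ j, v j‖ := mul_le_of_le_one_left (norm_nonneg _) (h_norm i)

/-- if `v_1, …, v_n` in a normed `C_b(X)`-module have disjoint supports
(there are pairwise disjoint closed sets `C_i` with `supp v_i ⊆ C_i`), then
`‖v_1 + ⋯ + v_n‖ = max_i ‖v_i‖`. -/
theorem statement0 {X : Type*} [MetricSpace X] [CompleteSpace X]
    [TopologicalSpace.SeparableSpace X]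
    {V : Type*} [NormedAddCommGroup V] [NormedSpace ℝ V] [Module (X →ᵇ ℝ) V]
    (hconst : CbConstSMulCompat X V) (hnorm : CbNormSMulCompat X V)
    (n : ℕ) (hn : 0 < n) (v : Fin n → V) (C : Fin n → Set X)
    (hC : ∀ i, IsClosed (C i)) (hdisj : Pairwise (Function.onFun Disjoint C))
    (hsupp : ∀ i, locNormCb (C i)ᶜ (v i) = 0) :
    ‖∑ i, v i‖ = ⨆ i, ‖v i‖ :=
  statement0_general hnorm n v C hC hdisj hsupp
end
end

section
/- Let X be a Polish space and R ⊆ C_b(X) a subring that approximates open sets. If K ⊆ X is compact, A ⊆ X is open and K ⊆ A, then there exists a function φ ∈ R with values in [0,1] such that φ = 1 on an open neighbourhood of K and supp φ ⊆ A. -/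
open BoundedContinuousFunction Filter Topology Set MeasureTheory ENNReal

noncomputable section

/-- A subring `R ⊆ C_b(X)` approximates open sets. -/
structure ApproximatesOpenSets {X : Type*} [TopologicalSpace X] (R : Subring (X →ᵇ ℝ)) : Prop where
  const_mem : ∀ c : ℝ, const X c ∈ R
  sup_mem : ∀ f g : X →ᵇ ℝ, f ∈ R → g ∈ R → ∃ h ∈ R, ∀ x, h x = max (f x) (g x)
  inf_mem : ∀ f g : X →ᵇ ℝ, f ∈ R → g ∈ R → ∃ h ∈ R, ∀ x, h x = min (f x) (g x)
  const_mul_mem : ∀ (c : ℝ) (f : X →ᵇ ℝ), f ∈ R → const X c * f ∈ R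
  approx : ∀ A : Set X, IsOpen A →
    ∃ f : ℕ → X →ᵇ ℝ, (∀ k, f k ∈ R) ∧ (∀ x, Monotone fun k => f k x) ∧
      ∀ x, Tendsto (fun k => f k x) atTop (𝓝 (A.indicator (fun _ => (1:ℝ)) x))

/-- The action of constant functions in `R` agrees with the real scalar multiplication. -/
def ConstSMulCompat {X : Type*} [TopologicalSpace X] (R : Subring (X →ᵇ ℝ)) (V : Type*)
    [NormedAddCommGroup V] [NormedSpace ℝ V] [Module R V] : Prop :=
  ∀ (c : ℝ) (hc : const X c ∈ R) (v : V), (⟨const X c, hc⟩ : ↥R) • v = c • v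

/-- The compatibility inequality defining a normed `R`-module. -/
def NormSMulCompat {X : Type*} [TopologicalSpace X] (R : Subring (X →ᵇ ℝ)) (V : Type*)
    [NormedAddCommGroup V] [Module R V] : Prop :=
  ∀ (s : Finset ℕ) (f : ℕ → ↥R) (v : ℕ → V) (M K : ℝ), 0 ≤ M → 0 ≤ K →
    ((s : Set ℕ).Pairwise fun i j =>
      Disjoint (tsupport ⇑((f i : X →ᵇ ℝ))) (tsupport ⇑((f j : X →ᵇ ℝ)))) →
    (∀ i ∈ s, ‖(f i : X →ᵇ ℝ)‖ ≤ M) → (∀ i ∈ s, ‖v i‖ ≤ K) →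
    ‖∑ i ∈ s, f i • v i‖ ≤ M * K

/-- The local seminorm `‖v‖_{|A}`. -/
def locNorm {X : Type*} [TopologicalSpace X] (R : Subring (X →ᵇ ℝ)) {V : Type*}
    [NormedAddCommGroup V] [Module R V] (A : Set X) (v : V) : ℝ :=
  sSup {r : ℝ | ∃ f : ↥R, tsupport ⇑((f : X →ᵇ ℝ)) ⊆ A ∧ ‖(f : X →ᵇ ℝ)‖ ≤ 1 ∧ r = ‖f • v‖}

/-- The germ seminorm `|v|_g(x)`. -/
def germNorm {X : Type*} [TopologicalSpace X] (R : Subring (X →ᵇ ℝ)) {V : Type*}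
    [NormedAddCommGroup V] [Module R V] (v : V) (x : X) : ℝ :=
  sInf {r : ℝ | ∃ A : Set X, IsOpen A ∧ x ∈ A ∧ r = locNorm R A v}

/-- `supp v ⊆ B`: there is a closed set `C ⊆ B` with `‖v‖_{|X∖C} = 0`. -/
def suppIn {X : Type*} [TopologicalSpace X] (R : Subring (X →ᵇ ℝ)) {V : Type*}
    [NormedAddCommGroup V] [Module R V] (v : V) (B : Set X) : Prop :=
  ∃ C : Set X, IsClosed C ∧ C ⊆ B ∧ locNorm R Cᶜ v = 0

/-- σ-additivity, with convergence of the partial sums in norm. -/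
def SigmaAdditive {X : Type*} [MeasurableSpace X] {E : Type*} [NormedAddCommGroup E]
    (N : Set X → E) : Prop :=
  ∀ A : ℕ → Set X, (∀ n, MeasurableSet (A n)) → Pairwise (Function.onFun Disjoint A) →
    Tendsto (fun n => ∑ k ∈ Finset.range n, N (A k)) atTop (𝓝 (N (⋃ k, A k)))

/-- A local vector measure on the normed `R`-module `V`. -/
structure IsLocalVectorMeasure {X : Type*} [TopologicalSpace X] [MeasurableSpace X]
    (R : Subring (X →ᵇ ℝ)) {V : Type*} [NormedAddCommGroup V] [NormedSpace ℝ V] [Module R V]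
    (N : Set X → V →L[ℝ] ℝ) : Prop where
  sigma_additive : SigmaAdditive N
  weakly_local : ∀ A : Set X, IsOpen A → ∀ v : V, locNorm R A v = 0 → N A v = 0

/-- The total variation `|N|(B)`, as the supremum of `Σ ‖N(A_i)‖` over finite Borel
partitions of `B`. -/
def totalVar {X : Type*} [MeasurableSpace X] {E : Type*} [NormedAddCommGroup E]
    (N : Set X → E) (B : Set X) : ℝ≥0∞ :=
  ⨆ (n : ℕ) (A : Fin n → Set X)
    (_ : (∀ i, MeasurableSet (A i)) ∧ Pairwise (Function.onFun Disjoint A) ∧ (⋃ i, A i) = B),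
      ∑ i, (‖N (A i)‖₊ : ℝ≥0∞)

/-- Tightness of a functional `F ∈ V'` with respect to `R`. -/
def IsTight {X : Type*} [TopologicalSpace X] (R : Subring (X →ᵇ ℝ)) {V : Type*}
    [NormedAddCommGroup V] [NormedSpace ℝ V] [Module R V] (F : V →L[ℝ] ℝ) : Prop :=
  ∀ (v : V) (f : ℕ → ↥R),
    (∀ x, Antitone fun n => ((f n : X →ᵇ ℝ)) x) →
    (∀ x, Tendsto (fun n => ((f n : X →ᵇ ℝ)) x) atTop (𝓝 (0:ℝ))) →
    Tendsto (fun n => F ((f n) • v)) atTop (𝓝 (0:ℝ))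

/-!
Take an increasing sequence `f_k ∈ R` converging pointwise to `χ_A`. The open sets
`{f_k > 3/4}` increase and cover the compact set `K`, so a single `g = f_N` exceeds `3/4`
on `K`. Since `g ≤ χ_A`, the function `φ = min (max (4g - 2) 0) 1`, which lies in `R` because
`R` is a lattice containing the constants, is `1` on the open set `{g > 3/4}` and vanishes
off the closed set `{g ≥ 1/2} ⊆ A`.
-/

theorem IsCompact.exists_forall_lt_of_monotone_tendsto {X ι : Type*} [TopologicalSpace X]
    [Preorder ι] [IsDirectedOrder ι] [Nonempty ι] {K : Set X} (hK : IsCompact K)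
    {f : ι → X → ℝ} (hf : ∀ i, Continuous (f i)) (hmono : ∀ x, Monotone fun i => f i x)
    {l : X → ℝ} (hl : ∀ x, Tendsto (fun i => f i x) atTop (𝓝 (l x))) {c : ℝ}
    (hc : ∀ x ∈ K, c < l x) : ∃ i, ∀ x ∈ K, c < f i x := by
  have hcover : K ⊆ ⋃ i, {x | c < f i x} := fun x hx =>
    mem_iUnion.2 ((hl x).eventually (eventually_gt_nhds (hc x hx))).exists
  have hdir : Directed (· ⊆ ·) fun i => {x | c < f i x} :=
    Monotone.directed_le fun i j hij x (hx : c < f i x) => hx.trans_le (hmono x hij)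
  exact hK.elim_directed_cover _ (fun i => isOpen_lt continuous_const (hf i)) hcover hdir

namespace ApproximatesOpenSets

variable {X : Type*} [TopologicalSpace X] {R : Subring (X →ᵇ ℝ)}

theorem exists_mem_eq_min_max (hR : ApproximatesOpenSets R) {g : X →ᵇ ℝ} (hg : g ∈ R)
    (a b : ℝ) : ∃ φ ∈ R, ∀ x, φ x = min (max (g x) a) b := by
  obtain ⟨ψ, hψR, hψ⟩ := hR.sup_mem g (const X a) hg (hR.const_mem a)
  obtain ⟨φ, hφR, hφ⟩ := hR.inf_mem ψ (const X b) hψR (hR.const_mem b)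
  exact ⟨φ, hφR, fun x => by rw [hφ, hψ, const_apply, const_apply]⟩

theorem exists_mem_le_indicator_forall_lt (hR : ApproximatesOpenSets R) {K A : Set X}
    (hK : IsCompact K) (hA : IsOpen A) (hKA : K ⊆ A) {c : ℝ} (hc : c < 1) :
    ∃ g ∈ R, (∀ x, g x ≤ A.indicator 1 x) ∧ ∀ x ∈ K, c < g x := by
  obtain ⟨f, hfR, hmono, hlim⟩ := hR.approx A hA
  have hcK : ∀ x ∈ K, c < A.indicator 1 x := fun x hx => by
    rwa [indicator_of_mem (hKA hx), Pi.one_apply]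
  obtain ⟨N, hN⟩ := hK.exists_forall_lt_of_monotone_tendsto (fun k => (f k).continuous)
    hmono hlim hcK
  exact ⟨f N, hfR N, fun x => (hmono x).ge_of_tendsto (hlim x) N, hN⟩

end ApproximatesOpenSets

theorem statement3_general {X : Type*} [MetricSpace X]
    (R : Subring (X →ᵇ ℝ)) (hR : ApproximatesOpenSets R)
    (K A : Set X) (hK : IsCompact K) (hA : IsOpen A) (hKA : K ⊆ A) :
    ∃ φ : X →ᵇ ℝ, φ ∈ R ∧ (∀ x, φ x ∈ Icc (0:ℝ) 1) ∧
      (∃ U : Set X, IsOpen U ∧ K ⊆ U ∧ ∀ x ∈ U, φ x = 1) ∧ tsupport ⇑φ ⊆ A := by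
  obtain ⟨g, hgR, hg_le, hgK⟩ :=
    hR.exists_mem_le_indicator_forall_lt hK hA hKA (c := 3 / 4) (by norm_num)
  obtain ⟨φ, hφR, hφ⟩ := hR.exists_mem_eq_min_max
    (R.sub_mem (R.mul_mem (hR.const_mem 4) hgR) (hR.const_mem 2)) 0 1
  replace hφ : ∀ x, φ x = min (max (4 * g x - 2) 0) 1 := by simpa using hφ
  have hsupp : tsupport φ ⊆ {x | 1 / 2 ≤ g x} := by
    refine closure_minimal (fun x hx => ?_) (isClosed_le continuous_const g.continuous)
    show 1 / 2 ≤ g x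
    by_contra! hlt
    exact hx (by rw [hφ, max_eq_right (by linarith)]; simp)
  have hgA : {x | 1 / 2 ≤ g x} ⊆ A := fun x (hx : 1 / 2 ≤ g x) => by
    by_contra hxA
    have := hg_le x
    rw [indicator_of_notMem hxA] at this
    linarith
  refine ⟨φ, hφR, fun x => ?_, ⟨{x | 3 / 4 < g x}, isOpen_lt continuous_const g.continuous,
    hgK, fun x (hx : 3 / 4 < g x) => ?_⟩, hsupp.trans hgA⟩
  · rw [hφ]
    exact ⟨le_min (le_max_right _ _) zero_le_one, min_le_right _ _⟩
  · rw [hφ, max_eq_left (by linarith), min_eq_right (by linarith)]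

/-- for `K ⊆ A` with `K` compact and `A` open, there is `φ ∈ R` with values
in `[0,1]`, equal to `1` on an open neighbourhood of `K` and with `supp φ ⊆ A`. -/
theorem statement3 {X : Type*} [MetricSpace X] [CompleteSpace X]
    [TopologicalSpace.SeparableSpace X]
    (R : Subring (X →ᵇ ℝ)) (hR : ApproximatesOpenSets R)
    (K A : Set X) (hK : IsCompact K) (hA : IsOpen A) (hKA : K ⊆ A) :
    ∃ φ : X →ᵇ ℝ, φ ∈ R ∧ (∀ x, φ x ∈ Icc (0:ℝ) 1) ∧
      (∃ U : Set X, IsOpen U ∧ K ⊆ U ∧ ∀ x ∈ U, φ x = 1) ∧ tsupport ⇑φ ⊆ A :=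
  statement3_general R hR K A hK hA hKA
end
end

section
/- Let X be a Polish space, R ⊆ C_b(X) a subring that approximates open sets and V a normed R-module. If {N_n} is a sequence of local vector measures on V that is Cauchy for the norm N ↦ |N|(X), i.e. |N_n − N_m|(X) → 0 as n, m → ∞, then there exists a local vector measure N on V with |N_n − N|(X) → 0. In other words, the space of local vector measures on V equipped with the norm N ↦ |N|(X) is a Banach space. -/
/-!
The total variation `|D|(X)` dominates `‖D(B)‖` for every Borel set `B`, so a Cauchy sequence
`N n` converges setwise in the Banach space `V'`; call the limit `M`. Total variation is lower
semicontinuous under setwise convergence, which gives `|N n - M|(X) → 0`. Weak locality passes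
to `M` pointwise, and σ-additivity passes to `M` because its partial sums are uniform limits of
those of `N n`.
-/

open BoundedContinuousFunction Filter Topology Set MeasureTheory ENNReal

noncomputable section

section TotalVariation

variable {X : Type*} [MeasurableSpace X] {E : Type*} [NormedAddCommGroup E]

lemma sum_nnnorm_le_totalVar (D : Set X → E) {B : Set X} (hB : MeasurableSet B) {p : ℕ}
    {A : Fin p → Set X} (hA : ∀ i, MeasurableSet (A i))
    (hd : Pairwise (Function.onFun Disjoint A)) (hAB : ∀ i, A i ⊆ B) :
    ∑ i, (‖D (A i)‖₊ : ℝ≥0∞) ≤ totalVar D B := by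
  set A' : Fin (p + 1) → Set X := Fin.cons (B \ ⋃ i, A i) A
  have hA' : (∀ i, MeasurableSet (A' i)) ∧ Pairwise (Function.onFun Disjoint A') ∧
      ⋃ i, A' i = B := by
    refine ⟨Fin.cases (hB.diff (.iUnion hA)) hA, ?_, ?_⟩
    · rw [pairwise_fin_succ_iff_of_isSymm]
      exact ⟨fun j => disjoint_sdiff_left.mono_right (subset_iUnion A j), hd⟩
    · simp [A', sdiff_union_of_subset (iUnion_subset hAB)]
  calc ∑ i, (‖D (A i)‖₊ : ℝ≥0∞) ≤ ∑ i, (‖D (A' i)‖₊ : ℝ≥0∞) := by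
        simp [A', Fin.sum_univ_succ]
    _ ≤ totalVar D B := le_iSup₂_of_le (p + 1) A' (le_iSup_of_le hA' le_rfl)

lemma nnnorm_sum_le_totalVar (D : Set X → E) {B : Set X} (hB : MeasurableSet B) {p : ℕ}
    {A : Fin p → Set X} (hA : ∀ i, MeasurableSet (A i))
    (hd : Pairwise (Function.onFun Disjoint A)) (hAB : ∀ i, A i ⊆ B) :
    (‖∑ i, D (A i)‖₊ : ℝ≥0∞) ≤ totalVar D B := by
  rw [← enorm_eq_nnnorm]
  refine (enorm_sum_le _ _).trans ?_
  simpa only [enorm_eq_nnnorm] using sum_nnnorm_le_totalVar D hB hA hd hAB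

lemma nnnorm_le_totalVar (D : Set X → E) {A B : Set X} (hA : MeasurableSet A) (hAB : A ⊆ B)
    (hB : MeasurableSet B) : (‖D A‖₊ : ℝ≥0∞) ≤ totalVar D B := by
  simpa using sum_nnnorm_le_totalVar D hB (A := fun _ : Fin 1 => A) (fun _ => hA)
    Subsingleton.pairwise (fun _ => hAB)

lemma totalVar_le_of_tendsto {ι : Type*} {l : Filter ι} [l.NeBot] {D : ι → Set X → E}
    {D' : Set X → E} (hD : ∀ A, MeasurableSet A → Tendsto (fun i => D i A) l (𝓝 (D' A)))
    {B : Set X} {c : ℝ≥0∞} (hc : ∀ᶠ i in l, totalVar (D i) B ≤ c) : totalVar D' B ≤ c := by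
  refine iSup₂_le fun p A => iSup_le fun ⟨hA, hd, hAB⟩ => ?_
  have hsum : Tendsto (fun i => ∑ j, (‖D i (A j)‖₊ : ℝ≥0∞)) l
      (𝓝 (∑ j, (‖D' (A j)‖₊ : ℝ≥0∞))) :=
    tendsto_finsetSum _ fun j _ => ENNReal.tendsto_coe.mpr (hD (A j) (hA j)).nnnorm
  refine le_of_tendsto hsum (hc.mono fun i hi => le_trans ?_ hi)
  exact le_iSup₂_of_le p A (le_iSup_of_le ⟨hA, hd, hAB⟩ le_rfl)

end TotalVariation

section Convergence

variable {X : Type*} [MeasurableSpace X] {E : Type*} [NormedAddCommGroup E]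

lemma tendsto_apply_of_tendsto_totalVar_sub {ι : Type*} {l : Filter ι} {D : ι → Set X → E}
    {M : Set X → E} (h : Tendsto (fun i => totalVar (fun B => D i B - M B) univ) l (𝓝 0))
    {A : Set X} (hA : MeasurableSet A) : Tendsto (fun i => D i A) l (𝓝 (M A)) := by
  rw [tendsto_iff_edist_tendsto_0]
  refine tendsto_of_tendsto_of_tendsto_of_le_of_le tendsto_const_nhds h (fun _ => bot_le)
    fun i => ?_
  rw [edist_eq_enorm_sub, enorm_eq_nnnorm]
  exact nnnorm_le_totalVar (fun B => D i B - M B) hA (subset_univ A) .univ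

lemma SigmaAdditive.of_tendsto_totalVar_sub {ι : Type*} {l : Filter ι} [l.NeBot]
    {D : ι → Set X → E} {M : Set X → E} (hD : ∀ i, SigmaAdditive (D i))
    (h : Tendsto (fun i => totalVar (fun B => D i B - M B) univ) l (𝓝 0)) :
    SigmaAdditive M := by
  intro A hA hd
  have hunif : TendstoUniformly (fun i p => ∑ k ∈ Finset.range p, D i (A k))
      (fun p => ∑ k ∈ Finset.range p, M (A k)) l := by
    rw [EMetric.tendstoUniformly_iff]
    intro ε hε
    filter_upwards [(tendsto_order.1 h).2 ε hε] with i hi p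
    rw [edist_comm, edist_eq_enorm_sub, ← Finset.sum_sub_distrib, Finset.sum_range,
      enorm_eq_nnnorm]
    exact (nnnorm_sum_le_totalVar (fun B => D i B - M B) .univ (fun k => hA k)
      (hd.comp_of_injective Fin.val_injective) fun _ => subset_univ _).trans_lt hi
  exact hunif.tendsto_of_eventually_tendsto (.of_forall fun i => hD i A hA hd)
    (tendsto_apply_of_tendsto_totalVar_sub h (.iUnion hA))

lemma cauchySeq_apply_of_totalVar {D : ℕ → Set X → E} {B : Set X} (hB : MeasurableSet B)
    (hcauchy : ∀ ε : ℝ≥0∞, 0 < ε → ∃ n₀ : ℕ, ∀ n ≥ n₀, ∀ m ≥ n₀,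
      totalVar (fun A => D n A - D m A) B < ε)
    {A : Set X} (hA : MeasurableSet A) (hAB : A ⊆ B) : CauchySeq fun n => D n A := by
  refine EMetric.cauchySeq_iff'.2 fun ε hε => ?_
  obtain ⟨n₀, hn₀⟩ := hcauchy ε hε
  refine ⟨n₀, fun n hn => ?_⟩
  rw [edist_eq_enorm_sub, enorm_eq_nnnorm]
  exact (nnnorm_le_totalVar _ hA hAB hB).trans_lt (hn₀ n hn n₀ le_rfl)

lemma tendsto_totalVar_sub_of_cauchy {D : ℕ → Set X → E} {M : Set X → E} {B : Set X}
    (hcauchy : ∀ ε : ℝ≥0∞, 0 < ε → ∃ n₀ : ℕ, ∀ n ≥ n₀, ∀ m ≥ n₀,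
      totalVar (fun A => D n A - D m A) B < ε)
    (hM : ∀ A, MeasurableSet A → Tendsto (fun n => D n A) atTop (𝓝 (M A))) :
    Tendsto (fun n => totalVar (fun A => D n A - M A) B) atTop (𝓝 0) := by
  refine ENNReal.tendsto_atTop_zero.2 fun ε hε => ?_
  obtain ⟨n₀, hn₀⟩ := hcauchy ε hε
  refine ⟨n₀, fun n hn => totalVar_le_of_tendsto (D := fun m A => D n A - D m A)
    (fun A hA => tendsto_const_nhds.sub (hM A hA)) ?_⟩
  filter_upwards [eventually_ge_atTop n₀] with m hm using (hn₀ n hn m hm).le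

end Convergence

lemma IsLocalVectorMeasure.of_tendsto_totalVar_sub {X : Type*} [TopologicalSpace X]
    [MeasurableSpace X] [OpensMeasurableSpace X] {R : Subring (X →ᵇ ℝ)} {V : Type*}
    [NormedAddCommGroup V] [NormedSpace ℝ V] [Module R V] {ι : Type*} {l : Filter ι} [l.NeBot]
    {N : ι → Set X → V →L[ℝ] ℝ} {M : Set X → V →L[ℝ] ℝ}
    (hN : ∀ i, IsLocalVectorMeasure R (N i))
    (h : Tendsto (fun i => totalVar (fun B => N i B - M B) univ) l (𝓝 0)) :
    IsLocalVectorMeasure R M where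
  sigma_additive := .of_tendsto_totalVar_sub (fun i => (hN i).sigma_additive) h
  weakly_local A hA v hv := by
    have hlim : Tendsto (fun i => N i A v) l (𝓝 (M A v)) :=
      ((continuous_eval_const v).tendsto _).comp
        (tendsto_apply_of_tendsto_totalVar_sub h hA.measurableSet)
    exact tendsto_nhds_unique hlim
      (tendsto_const_nhds.congr fun i => ((hN i).weakly_local A hA v hv).symm)

theorem statement6_general {X : Type*} [MetricSpace X] [MeasurableSpace X] [BorelSpace X]
    {V : Type*} [NormedAddCommGroup V] [NormedSpace ℝ V]
    (R : Subring (X →ᵇ ℝ)) [Module R V]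
    (N : ℕ → Set X → V →L[ℝ] ℝ) (hN : ∀ n, IsLocalVectorMeasure R (N n))
    (hcauchy : ∀ ε : ℝ≥0∞, 0 < ε → ∃ n₀ : ℕ, ∀ n ≥ n₀, ∀ m ≥ n₀,
      totalVar (fun B => N n B - N m B) Set.univ < ε) :
    ∃ M : Set X → V →L[ℝ] ℝ, IsLocalVectorMeasure R M ∧
      Tendsto (fun n => totalVar (fun B => N n B - M B) Set.univ) atTop (𝓝 0) := by
  set M : Set X → V →L[ℝ] ℝ := fun B => limUnder atTop fun n => N n B
  have hM (B : Set X) (hB : MeasurableSet B) : Tendsto (fun n => N n B) atTop (𝓝 (M B)) :=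
    (cauchySeq_apply_of_totalVar .univ hcauchy hB (subset_univ B)).tendsto_limUnder
  have hconv := tendsto_totalVar_sub_of_cauchy hcauchy hM
  exact ⟨M, .of_tendsto_totalVar_sub hN hconv, hconv⟩

/-- the space of local vector measures on `V` with the norm `N ↦ |N|(X)`
is complete: every Cauchy sequence converges. -/
theorem statement6 {X : Type*} [MetricSpace X] [CompleteSpace X]
    [TopologicalSpace.SeparableSpace X] [MeasurableSpace X] [BorelSpace X]
    {V : Type*} [NormedAddCommGroup V] [NormedSpace ℝ V]
    (R : Subring (X →ᵇ ℝ)) [Module R V]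
    (hR : ApproximatesOpenSets R) (hconst : ConstSMulCompat R V) (hnorm : NormSMulCompat R V)
    (N : ℕ → Set X → V →L[ℝ] ℝ) (hN : ∀ n, IsLocalVectorMeasure R (N n))
    (hcauchy : ∀ ε : ℝ≥0∞, 0 < ε → ∃ n₀ : ℕ, ∀ n ≥ n₀, ∀ m ≥ n₀,
      totalVar (fun B => N n B - N m B) Set.univ < ε) :
    ∃ M : Set X → V →L[ℝ] ℝ, IsLocalVectorMeasure R M ∧
      Tendsto (fun n => totalVar (fun B => N n B - M B) Set.univ) atTop (𝓝 0) :=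
  statement6_general R N hN hcauchy
end
end

section
/- Let X be a Polish space, R ⊆ C_b(X) a subring that approximates open sets, V a normed R-module and N a local vector measure on V. Then for every f ∈ R, v ∈ V and every Borel set B ⊆ X one has N(B)(f v) = ∫_B f d(v·N), where v·N is the finite signed Borel measure B ↦ N(B)(v). Equivalently, (f v)·N = f (v·N) as signed measures. -/
open BoundedContinuousFunction Filter Topology Set MeasureTheory ENNReal

noncomputable section

/-
Since `1 • v = v`, the discrepancy `Δ_D(g) = N(D)(g v) - ∫_D g d(v·N)` is an additive function of
`g ∈ R` that vanishes on the integers; so it suffices to bound `Δ_B(g)` for `g ≥ 0` by a constant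
independent of `g`, as applying the bound to `n g` gives `|Δ_B(g)| ≤ C / n`.

Slice `B` into `S_i = B ∩ {i ≤ g < i + 1}`. On a neighbourhood of `S_i` the function `g` agrees with
`τ_i + (i - 1)`, where `τ_i` is a tent of height `≤ 2` in `g` supported in `{i - 1 ≤ g ≤ i + 3}`;
locality of `N`, extended from open sets to Borel sets by the π-λ theorem, gives
`Δ_{S_i}(g) = Δ_{S_i}(τ_i)`. The integrals of the `τ_i` contribute at most `2 (μ + ν)(B)`. For the
`N`-part, group the indices by their residue mod 5: within a class the tents have pairwise disjoint
supports, so `u = Σ τ_i v` has norm `≤ 2 ‖v‖` and the partial sum equals `N(⋃ S_i)(u)`, which is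
controlled by the uniform bound `sup_D ‖N(D)‖ < ∞` of a σ-additive vector measure.
-/

open Function

theorem eq_zero_of_forall_abs_nat_mul_le {a C : ℝ} (h : ∀ n : ℕ, |n * a| ≤ C) : a = 0 := by
  by_contra ha
  obtain ⟨n, hn⟩ := exists_nat_gt (C / |a|)
  rw [div_lt_iff₀ (abs_pos.2 ha)] at hn
  have := h n
  rw [abs_mul, Nat.abs_cast] at this
  linarith

section SetFunction

variable {X : Type*} [MeasurableSpace X] {E : Type*} [NormedAddCommGroup E] {N : Set X → E}

def IsUnboundedOn (N : Set X → E) (E' : Set X) : Prop :=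
  ∀ M : ℝ, ∃ F ⊆ E', MeasurableSet F ∧ M < ‖N F‖

namespace SigmaAdditive

theorem tendsto_apply_zero (hN : SigmaAdditive N) {A : ℕ → Set X}
    (hA : ∀ n, MeasurableSet (A n)) (hd : Pairwise (Disjoint on A)) :
    Tendsto (fun n => N (A n)) atTop (𝓝 0) := by
  have h := hN A hA hd
  have h' := (h.comp (tendsto_add_atTop_nat 1)).sub h
  rw [sub_self] at h'
  refine h'.congr fun n => ?_
  simp [Finset.sum_range_succ]

theorem apply_empty (hN : SigmaAdditive N) : N ∅ = 0 :=
  tendsto_nhds_unique tendsto_const_nhds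
    (hN.tendsto_apply_zero (A := fun _ => ∅) (fun _ => .empty) fun _ _ _ => disjoint_bot_left)

theorem apply_union (hN : SigmaAdditive N) {D D' : Set X} (hD : MeasurableSet D)
    (hD' : MeasurableSet D') (hd : Disjoint D D') : N (D ∪ D') = N D + N D' := by
  let A : ℕ → Set X := fun n => if n = 0 then D else if n = 1 then D' else ∅
  have hA : ∀ n, MeasurableSet (A n) := by
    intro n
    simp only [A]
    split_ifs <;> simp [hD, hD']
  have hAd : Pairwise (Disjoint on A) := by
    intro i j hij
    simp only [Function.onFun, A]
    split_ifs <;> first | omega | simp [hd.symm]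
  have hU : ⋃ n, A n = D ∪ D' := by
    ext x
    simp only [mem_iUnion, mem_union, A]
    constructor
    · rintro ⟨n, hn⟩
      split_ifs at hn <;> simp_all
    · rintro (h | h)
      exacts [⟨0, by simpa⟩, ⟨1, by simpa⟩]
  have h := hN A hA hAd
  rw [hU] at h
  refine tendsto_nhds_unique h (tendsto_atTop_of_eventually_const (i₀ := 2) fun n hn => ?_)
  obtain ⟨k, rfl⟩ := Nat.exists_eq_add_of_le' hn
  simp [Finset.sum_range_succ', A, hN.apply_empty, add_comm]

theorem apply_biUnion (hN : SigmaAdditive N) {A : ℕ → Set X} (hA : ∀ n, MeasurableSet (A n))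
    (hd : Pairwise (Disjoint on A)) (s : Finset ℕ) :
    N (⋃ i ∈ s, A i) = ∑ i ∈ s, N (A i) := by
  classical
  induction s using Finset.induction_on with
  | empty => simp [hN.apply_empty]
  | insert a s ha ih =>
    rw [Finset.set_biUnion_insert, Finset.sum_insert ha, ← ih]
    exact hN.apply_union (hA a) (Finset.measurableSet_biUnion s fun i _ => hA i)
      (disjoint_iUnion₂_right.2 fun i hi => hd (ne_of_mem_of_not_mem hi ha).symm)

theorem apply_diff (hN : SigmaAdditive N) {D F : Set X} (hD : MeasurableSet D)
    (hF : MeasurableSet F) (hFD : F ⊆ D) : N (D \ F) = N D - N F := by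
  rw [eq_sub_iff_add_eq, ← hN.apply_union (hD.diff hF) hF disjoint_sdiff_left,
    sdiff_union_of_subset hFD]

theorem isUnboundedOn_or_diff (hN : SigmaAdditive N) {E' F : Set X} (hF : MeasurableSet F)
    (h : IsUnboundedOn N E') : IsUnboundedOn N F ∨ IsUnboundedOn N (E' \ F) := by
  by_contra! ⟨hF', hEF'⟩
  simp only [IsUnboundedOn, not_forall, not_exists, not_and, not_lt] at hF' hEF'
  obtain ⟨M₁, hM₁⟩ := hF'
  obtain ⟨M₂, hM₂⟩ := hEF'
  obtain ⟨G, hGE, hG, hMG⟩ := h (M₁ + M₂)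
  have hsplit := hN.apply_union (hG.inter hF) (hG.diff hF) disjoint_sdiff_inter.symm
  rw [inter_union_sdiff] at hsplit
  have := norm_add_le (N (G ∩ F)) (N (G \ F))
  rw [← hsplit] at this
  linarith [hM₁ _ inter_subset_right (hG.inter hF),
    hM₂ _ (sdiff_subset_sdiff_left hGE) (hG.diff hF)]

theorem exists_subset_one_le_norm (hN : SigmaAdditive N) {E' : Set X} (hE : MeasurableSet E')
    (h : IsUnboundedOn N E') :
    ∃ F ⊆ E', MeasurableSet F ∧ 1 ≤ ‖N F‖ ∧ IsUnboundedOn N (E' \ F) := by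
  obtain ⟨F, hFE, hF, hlarge⟩ := h (1 + ‖N E'‖)
  have hcompl : 1 ≤ ‖N (E' \ F)‖ := by
    rw [hN.apply_diff hE hF hFE]
    linarith [norm_sub_norm_le (N F) (N E'), norm_sub_rev (N E') (N F)]
  rcases hN.isUnboundedOn_or_diff hF h with hF' | hEF
  · exact ⟨E' \ F, sdiff_subset, hE.diff hF, hcompl, by rwa [sdiff_sdiff_cancel_left hFE]⟩
  · exact ⟨F, hFE, hF, by linarith [norm_nonneg (N E')], hEF⟩

/-- A σ-additive set function is bounded: otherwise unbounded sets can be split off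
repeatedly, producing disjoint sets `F n` with `‖N (F n)‖ ≥ 1`, against `N (F n) → 0`. -/
theorem exists_bound (hN : SigmaAdditive N) : ∃ M, ∀ D, MeasurableSet D → ‖N D‖ ≤ M := by
  by_contra! h
  have huniv : IsUnboundedOn N univ := fun M =>
    let ⟨D, hD, hMD⟩ := h M
    ⟨D, subset_univ D, hD, hMD⟩
  have step (E' : {E' : Set X // MeasurableSet E' ∧ IsUnboundedOn N E'}) :=
    hN.exists_subset_one_le_norm E'.2.1 E'.2.2
  choose F hFE hF hF1 hrest using step
  let rem : ℕ → {E' : Set X // MeasurableSet E' ∧ IsUnboundedOn N E'} := fun n =>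
    Nat.rec ⟨univ, .univ, huniv⟩ (fun _ E' => ⟨E'.1 \ F E', E'.2.1.diff (hF E'), hrest E'⟩) n
  have hanti : Antitone fun n => (rem n).1 := antitone_nat_of_succ_le fun _ => sdiff_subset
  have hd : Pairwise (Disjoint on fun n => F (rem n)) :=
    (pairwise_disjoint_on _).2 fun m n hmn =>
      (disjoint_sdiff_left.mono_left ((hFE _).trans (hanti (Nat.succ_le_of_lt hmn)))).symm
  have hlim := (hN.tendsto_apply_zero (fun n => hF (rem n)) hd).norm
  rw [norm_zero] at hlim
  obtain ⟨n, hn⟩ := (hlim.eventually (gt_mem_nhds one_pos)).exists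
  linarith [hF1 (rem n)]

end SigmaAdditive

end SetFunction

section Locality

variable {X : Type*} [TopologicalSpace X] {R : Subring (X →ᵇ ℝ)} {V : Type*}
  [NormedAddCommGroup V]

theorem locNorm_eq_zero_of_forall_smul_eq_zero [Module R V] (A : Set X) {w : V}
    (hw : ∀ t : R, tsupport ⇑(t : X →ᵇ ℝ) ⊆ A → t • w = 0) : locNorm R A w = 0 := by
  have hset : {r : ℝ | ∃ t : ↥R, tsupport ⇑((t : X →ᵇ ℝ)) ⊆ A ∧ ‖(t : X →ᵇ ℝ)‖ ≤ 1 ∧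
      r = ‖t • w‖} = {0} := by
    refine eq_singleton_iff_unique_mem.2 ⟨⟨0, ?_, by simp, by simp⟩, ?_⟩
    · simp [tsupport_eq_empty_iff.2 rfl]
    · rintro r ⟨t, ht, -, rfl⟩
      simp [hw t ht]
  rw [locNorm, hset, csSup_singleton]

variable [MeasurableSpace X] [BorelSpace X] [NormedSpace ℝ V] [Module R V]
  {N : Set X → V →L[ℝ] ℝ}

namespace IsLocalVectorMeasure

theorem apply_eq_zero_of_forall_smul_eq_zero (hN : IsLocalVectorMeasure R N) {A : Set X}
    (hA : IsOpen A) {w : V} (hw : ∀ t : R, tsupport ⇑(t : X →ᵇ ℝ) ⊆ A → t • w = 0)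
    {D : Set X} (hD : MeasurableSet D) (hDA : D ⊆ A) : N D w = 0 := by
  have hNA : N A w = 0 := hN.weakly_local A hA w (locNorm_eq_zero_of_forall_smul_eq_zero A hw)
  suffices ∀ D, MeasurableSet D → N (D ∩ A) w = 0 by
    simpa [inter_eq_self_of_subset_left hDA] using this D hD
  intro D hD
  induction D, hD using MeasurableSet.induction_on_open with
  | isOpen U hU =>
    exact hN.weakly_local _ (hU.inter hA) w
      (locNorm_eq_zero_of_forall_smul_eq_zero _ fun t ht => hw t (ht.trans inter_subset_right))
  | compl t ht iht =>
    have hset : tᶜ ∩ A = A \ (t ∩ A) := by ext; simp; tauto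
    rw [hset, hN.sigma_additive.apply_diff hA.measurableSet (ht.inter hA.measurableSet)
      inter_subset_right, _root_.sub_apply, hNA, iht, sub_zero]
  | iUnion g hgd hg ihg =>
    rw [iUnion_inter]
    have hconv := hN.sigma_additive (fun i => g i ∩ A) (fun i => (hg i).inter hA.measurableSet)
      fun i j hij => (hgd hij).mono inter_subset_left inter_subset_left
    refine tendsto_nhds_unique (((ContinuousLinearMap.apply ℝ ℝ w).continuous.tendsto _).comp
      hconv) ?_
    simp [Function.comp_def, ihg]

theorem apply_smul_eq_of_eventuallyEq (hN : IsLocalVectorMeasure R N) {D : Set X}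
    (hD : MeasurableSet D) {g h : R} (hgh : ⇑(g : X →ᵇ ℝ) =ᶠ[𝓝ˢ D] ⇑(h : X →ᵇ ℝ)) (v : V) :
    N D (g • v) = N D (h • v) := by
  obtain ⟨U, hU, hDU, hgU⟩ := eventually_nhdsSet_iff_exists.1 hgh
  rw [← sub_eq_zero, ← map_sub, ← sub_smul]
  refine hN.apply_eq_zero_of_forall_smul_eq_zero hU (fun t ht => ?_) hD hDU
  suffices t * (g - h) = 0 by rw [← mul_smul, this, zero_smul]
  ext x
  by_cases hx : x ∈ U
  · simp [hgU x hx]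
  · simp [image_eq_zero_of_notMem_tsupport fun h => hx (ht h)]

theorem apply_smul_eq_zero_of_disjoint (hN : IsLocalVectorMeasure R N) {D : Set X}
    (hD : MeasurableSet D) {h : R} (hhD : Disjoint (tsupport ⇑(h : X →ᵇ ℝ)) D) (v : V) :
    N D (h • v) = 0 := by
  have : ⇑(h : X →ᵇ ℝ) =ᶠ[𝓝ˢ D] ⇑((0 : R) : X →ᵇ ℝ) :=
    eventually_nhdsSet_iff_exists.2 ⟨(tsupport _)ᶜ, (isClosed_tsupport _).isOpen_compl,
      hhD.subset_compl_left, fun x hx => image_eq_zero_of_notMem_tsupport hx⟩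
  rw [hN.apply_smul_eq_of_eventuallyEq hD this, zero_smul, map_zero]

end IsLocalVectorMeasure

end Locality

section Tent

variable {X : Type*} [TopologicalSpace X]

theorem ApproximatesOpenSets.sup_mem' {R : Subring (X →ᵇ ℝ)} (hR : ApproximatesOpenSets R)
    {f g : X →ᵇ ℝ} (hf : f ∈ R) (hg : g ∈ R) : f ⊔ g ∈ R := by
  obtain ⟨h, hh, hfg⟩ := hR.sup_mem f g hf hg
  convert hh
  ext x
  exact (hfg x).symm

theorem ApproximatesOpenSets.inf_mem' {R : Subring (X →ᵇ ℝ)} (hR : ApproximatesOpenSets R)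
    {f g : X →ᵇ ℝ} (hf : f ∈ R) (hg : g ∈ R) : f ⊓ g ∈ R := by
  obtain ⟨h, hh, hfg⟩ := hR.inf_mem f g hf hg
  convert hh
  ext x
  exact (hfg x).symm

def tent (g : X →ᵇ ℝ) (a : ℤ) : X →ᵇ ℝ := 0 ⊔ ((g - a) ⊓ ((a + 4 : ℤ) - g))

variable (g : X →ᵇ ℝ) (a : ℤ)

theorem tent_apply (x : X) : tent g a x = max 0 (min (g x - a) (a + 4 - g x)) := by
  simp [tent]

theorem tent_mem {R : Subring (X →ᵇ ℝ)} (hR : ApproximatesOpenSets R) (hg : g ∈ R) :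
    tent g a ∈ R :=
  hR.sup_mem' R.zero_mem (hR.inf_mem' (R.sub_mem hg (intCast_mem R a))
    (R.sub_mem (intCast_mem R _) hg))

theorem norm_tent_le : ‖tent g a‖ ≤ 2 := by
  refine (norm_le zero_le_two).2 fun x => ?_
  rw [tent_apply, Real.norm_eq_abs, abs_of_nonneg (le_max_left _ _)]
  refine max_le zero_le_two ?_
  rcases le_total (g x - a) 2 with h | h
  · exact min_le_of_left_le h
  · exact min_le_of_right_le (by linarith)

theorem tent_apply_of_mem_Icc {x : X} (hx : g x ∈ Icc (a : ℝ) (a + 2)) :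
    tent g a x = g x - a := by
  rw [tent_apply, min_eq_left (by linarith [hx.2]), max_eq_right (by linarith [hx.1])]

theorem tsupport_tent_subset : tsupport (tent g a) ⊆ g ⁻¹' Icc (a : ℝ) (a + 4) := by
  refine closure_minimal (fun x hx => ?_) (isClosed_Icc.preimage g.continuous)
  by_contra hxa
  refine hx ?_
  rw [tent_apply]
  refine max_eq_left ?_
  rcases not_and_or.1 hxa with h | h
  · exact min_le_of_left_le (by linarith [not_le.1 h])
  · exact min_le_of_right_le (by linarith [not_le.1 h])

end Tent

section Slice

variable {X : Type*}

def slice (g : X → ℝ) (B : Set X) (i : ℕ) : Set X := B ∩ g ⁻¹' Ico (i : ℝ) (i + 1)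

variable (g : X → ℝ) (B : Set X)

theorem measurableSet_slice [MeasurableSpace X] (hg : Measurable g) (hB : MeasurableSet B)
    (i : ℕ) : MeasurableSet (slice g B i) :=
  hB.inter (hg measurableSet_Ico)

theorem pairwise_disjoint_slice : Pairwise (Disjoint on slice g B) := by
  intro i j hij
  refine disjoint_left.2 fun x hi hj => hij ?_
  have h₁ : (i : ℝ) < j + 1 := hi.2.1.trans_lt hj.2.2
  have h₂ : (j : ℝ) < i + 1 := hj.2.1.trans_lt hi.2.2
  norm_cast at h₁ h₂
  omega

theorem slice_subset_preimage_Icc (i : ℕ) :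
    slice g B i ⊆ g ⁻¹' Icc ((i : ℝ) - 1) (i + 3) :=
  fun _ hx => ⟨by linarith [hx.2.1], by linarith [hx.2.2]⟩

theorem biUnion_slice {m : ℕ} (hg₀ : ∀ x, 0 ≤ g x) (hgm : ∀ x, g x < m) :
    ⋃ i ∈ Finset.range m, slice g B i = B := by
  refine Subset.antisymm (iUnion₂_subset fun i _ => inter_subset_left) fun x hx => ?_
  refine mem_iUnion₂.2 ⟨⌊g x⌋₊, ?_, hx, Nat.floor_le (hg₀ x), Nat.lt_floor_add_one _⟩
  exact Finset.mem_range.2 ((Nat.floor_lt (hg₀ x)).2 (hgm x))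

end Slice

section Discrepancy

variable {X : Type*} [TopologicalSpace X] [MeasurableSpace X] [BorelSpace X]
  (R : Subring (X →ᵇ ℝ)) {V : Type*} [NormedAddCommGroup V] [NormedSpace ℝ V] [Module R V]
  (N : Set X → V →L[ℝ] ℝ) (v : V) (μ ν : Measure X) [IsFiniteMeasure μ] [IsFiniteMeasure ν]

def discrepancy (D : Set X) : R →+ ℝ where
  toFun g := N D (g • v) - ((∫ x in D, (g : X →ᵇ ℝ) x ∂μ) - ∫ x in D, (g : X →ᵇ ℝ) x ∂ν)
  map_zero' := by simp
  map_add' g h := by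
    simp only [add_smul, map_add, Subring.coe_add, BoundedContinuousFunction.add_apply]
    rw [integral_add ((g : X →ᵇ ℝ).integrable _) ((h : X →ᵇ ℝ).integrable _),
      integral_add ((g : X →ᵇ ℝ).integrable _) ((h : X →ᵇ ℝ).integrable _)]
    ring

variable {R N v μ ν}

theorem discrepancy_apply (D : Set X) (g : R) : discrepancy R N v μ ν D g =
    N D (g • v) - ((∫ x in D, (g : X →ᵇ ℝ) x ∂μ) - ∫ x in D, (g : X →ᵇ ℝ) x ∂ν) :=
  rfl

theorem discrepancy_intCast
    (hdecomp : ∀ D : Set X, MeasurableSet D → N D v = (μ D).toReal - (ν D).toReal)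
    {D : Set X} (hD : MeasurableSet D) (k : ℤ) : discrepancy R N v μ ν D k = 0 := by
  rw [← zsmul_one, map_zsmul, discrepancy_apply, one_smul, hdecomp D hD]
  simp [measureReal_def]

theorem discrepancy_biUnion (hN : SigmaAdditive N) {A : ℕ → Set X}
    (hA : ∀ n, MeasurableSet (A n)) (hd : Pairwise (Disjoint on A)) (s : Finset ℕ) (g : R) :
    discrepancy R N v μ ν (⋃ i ∈ s, A i) g = ∑ i ∈ s, discrepancy R N v μ ν (A i) g := by
  have hint (κ : Measure X) [IsFiniteMeasure κ] :
      ∫ x in ⋃ i ∈ s, A i, (g : X →ᵇ ℝ) x ∂κ = ∑ i ∈ s, ∫ x in A i, (g : X →ᵇ ℝ) x ∂κ :=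
    integral_biUnion_finset s (fun i _ => hA i) (hd.set_pairwise _)
      fun _ _ => ((g : X →ᵇ ℝ).integrable κ).integrableOn
  simp only [discrepancy_apply, hN.apply_biUnion hA hd, _root_.sum_apply, hint,
    Finset.sum_sub_distrib]

theorem discrepancy_congr (hN : IsLocalVectorMeasure R N) {D : Set X} (hD : MeasurableSet D)
    {g h : R} (hgh : ⇑(g : X →ᵇ ℝ) =ᶠ[𝓝ˢ D] ⇑(h : X →ᵇ ℝ)) :
    discrepancy R N v μ ν D g = discrepancy R N v μ ν D h := by
  have hint (κ : Measure X) :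
      ∫ x in D, (g : X →ᵇ ℝ) x ∂κ = ∫ x in D, (h : X →ᵇ ℝ) x ∂κ :=
    setIntegral_congr_fun hD hgh.self_of_nhdsSet
  rw [discrepancy_apply, discrepancy_apply, hN.apply_smul_eq_of_eventuallyEq hD hgh, hint, hint]

end Discrepancy

section Estimates

variable {X : Type*} [TopologicalSpace X] [MeasurableSpace X]

theorem abs_sum_setIntegral_le (κ : Measure X) [IsFiniteMeasure κ] (s : Finset ℕ)
    {D : ℕ → Set X} (hD : ∀ i, MeasurableSet (D i)) (hd : Pairwise (Disjoint on D))
    {h : ℕ → X →ᵇ ℝ} {c : ℝ} (hh : ∀ i ∈ s, ‖h i‖ ≤ c) :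
    |∑ i ∈ s, ∫ x in D i, h i x ∂κ| ≤ c * κ.real (⋃ i ∈ s, D i) := by
  calc |∑ i ∈ s, ∫ x in D i, h i x ∂κ|
      ≤ ∑ i ∈ s, |∫ x in D i, h i x ∂κ| := Finset.abs_sum_le_sum_abs _ _
    _ ≤ ∑ i ∈ s, c * κ.real (D i) := Finset.sum_le_sum fun i hi =>
        norm_setIntegral_le_of_norm_le_const (measure_lt_top κ _)
          fun x _ => ((h i).norm_coe_le_norm x).trans (hh i hi)
    _ = c * κ.real (⋃ i ∈ s, D i) := by
        rw [← Finset.mul_sum, measureReal_biUnion_finset (hd.set_pairwise _) fun i _ => hD i]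

variable [BorelSpace X] {R : Subring (X →ᵇ ℝ)} {V : Type*} [NormedAddCommGroup V]
  [NormedSpace ℝ V] [Module R V] {N : Set X → V →L[ℝ] ℝ} {M : ℝ} {μ ν : Measure X}

/-- Thanks to `NormSMulCompat`, the bound does not grow with the number of terms. -/
theorem IsLocalVectorMeasure.abs_sum_apply_smul_le (hN : IsLocalVectorMeasure R N)
    (hnorm : NormSMulCompat R V) (hM : ∀ D, MeasurableSet D → ‖N D‖ ≤ M) (s : Finset ℕ)
    {D : ℕ → Set X} (hD : ∀ i, MeasurableSet (D i)) (hd : Pairwise (Disjoint on D))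
    {h : ℕ → R} {c : ℝ} (hc : 0 ≤ c) (hh : ∀ i ∈ s, ‖(h i : X →ᵇ ℝ)‖ ≤ c)
    (hsupp : (s : Set ℕ).Pairwise fun i j =>
      Disjoint (tsupport ⇑(h i : X →ᵇ ℝ)) (tsupport ⇑(h j : X →ᵇ ℝ)))
    (hsuppD : (s : Set ℕ).Pairwise fun i j => Disjoint (tsupport ⇑(h j : X →ᵇ ℝ)) (D i))
    (v : V) : |∑ i ∈ s, N (D i) (h i • v)| ≤ M * (c * ‖v‖) := by
  set u := ∑ j ∈ s, h j • v
  have hu : ‖u‖ ≤ c * ‖v‖ :=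
    hnorm s h (fun _ => v) c ‖v‖ hc (norm_nonneg v) hsupp hh fun _ _ => le_rfl
  have hsum : ∑ i ∈ s, N (D i) (h i • v) = N (⋃ i ∈ s, D i) u := by
    rw [hN.sigma_additive.apply_biUnion hD hd, _root_.sum_apply]
    refine Finset.sum_congr rfl fun i hi => ?_
    rw [map_sum, Finset.sum_eq_single_of_mem i hi fun j hj hji =>
      hN.apply_smul_eq_zero_of_disjoint (hD i) (hsuppD hi hj hji.symm) v]
  have hM₀ : 0 ≤ M := (norm_nonneg _).trans (hM ∅ .empty)
  rw [hsum, ← Real.norm_eq_abs]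
  exact ((N _).le_opNorm u).trans (mul_le_mul (hM _ (Finset.measurableSet_biUnion s
    fun i _ => hD i)) hu (norm_nonneg _) hM₀)

theorem IsLocalVectorMeasure.abs_sum_apply_slice_smul_le (hN : IsLocalVectorMeasure R N)
    (hnorm : NormSMulCompat R V) (hM : ∀ D, MeasurableSet D → ‖N D‖ ≤ M) {g : X →ᵇ ℝ}
    {B : Set X} (hB : MeasurableSet B) (m : ℕ) {h : ℕ → R} (hh : ∀ i, ‖(h i : X →ᵇ ℝ)‖ ≤ 2)
    (hsupp : ∀ i : ℕ, tsupport ⇑(h i : X →ᵇ ℝ) ⊆ g ⁻¹' Icc ((i : ℝ) - 1) (i + 3)) (v : V) :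
    |∑ i ∈ Finset.range m, N (slice g B i) (h i • v)| ≤ 10 * M * ‖v‖ := by
  have hfar {i j : ℕ} (hij : i % 5 = j % 5) (hne : i ≠ j) :
      Disjoint (g ⁻¹' Icc ((i : ℝ) - 1) (i + 3)) (g ⁻¹' Icc ((j : ℝ) - 1) (j + 3)) := by
    refine Disjoint.preimage _ (disjoint_left.2 fun y hi hj => ?_)
    have : (i : ℝ) + 5 ≤ j ∨ (j : ℝ) + 5 ≤ i := by exact_mod_cast (by omega : i + 5 ≤ j ∨ j + 5 ≤ i)
    rcases this with h | h <;> linarith [hi.1, hi.2, hj.1, hj.2]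
  rw [← Finset.sum_fiberwise_of_maps_to (g := (· % 5)) (t := Finset.range 5)
    fun i _ => Finset.mem_range.2 (Nat.mod_lt _ (by norm_num))]
  calc |∑ r ∈ Finset.range 5, ∑ i ∈ Finset.range m with i % 5 = r, N (slice g B i) (h i • v)|
      ≤ ∑ r ∈ Finset.range 5,
          |∑ i ∈ Finset.range m with i % 5 = r, N (slice g B i) (h i • v)| :=
        Finset.abs_sum_le_sum_abs _ _
    _ ≤ ∑ r ∈ Finset.range 5, M * (2 * ‖v‖) := Finset.sum_le_sum fun r _ => by
        refine hN.abs_sum_apply_smul_le hnorm hM _ (measurableSet_slice _ _ g.continuous.measurable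
          hB) (pairwise_disjoint_slice _ _) zero_le_two (fun i _ => hh i) ?_ ?_ v
        · intro i hi j hj hij
          simp only [Finset.mem_coe, Finset.mem_filter] at hi hj
          exact (hfar (hi.2.trans hj.2.symm) hij).mono (hsupp i) (hsupp j)
        · intro i hi j hj hij
          simp only [Finset.mem_coe, Finset.mem_filter] at hi hj
          exact (hfar (hj.2.trans hi.2.symm) hij.symm).mono (hsupp j)
            (slice_subset_preimage_Icc _ _ i)
    _ = 10 * M * ‖v‖ := by simp; ring

variable [IsFiniteMeasure μ] [IsFiniteMeasure ν]

theorem discrepancy_slice_eq_tent (hR : ApproximatesOpenSets R) (hN : IsLocalVectorMeasure R N)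
    {v : V} (hdecomp : ∀ D : Set X, MeasurableSet D → N D v = (μ D).toReal - (ν D).toReal)
    {B : Set X} (hB : MeasurableSet B) (g : R) (i : ℕ) :
    discrepancy R N v μ ν (slice (g : X →ᵇ ℝ) B i) g =
      discrepancy R N v μ ν (slice (g : X →ᵇ ℝ) B i)
        ⟨tent g ((i : ℤ) - 1), tent_mem _ _ hR g.2⟩ := by
  set G : X →ᵇ ℝ := (g : X →ᵇ ℝ)
  have hS := measurableSet_slice G B G.continuous.measurable hB i
  have hnear : ⇑G =ᶠ[𝓝ˢ (slice G B i)]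
      ⇑((⟨tent G ((i : ℤ) - 1), tent_mem _ _ hR g.2⟩ + (((i : ℤ) - 1 : ℤ) : R) : R) :
        X →ᵇ ℝ) :=
    eventually_nhdsSet_iff_exists.2 ⟨G ⁻¹' Ioo ((i : ℝ) - 1) (i + 1),
      isOpen_Ioo.preimage G.continuous, fun x hx => ⟨by linarith [hx.2.1], hx.2.2⟩,
      fun x hx => by
        have := tent_apply_of_mem_Icc G ((i : ℤ) - 1) (x := x)
          ⟨by push_cast; linarith [hx.1], by push_cast; linarith [hx.2]⟩
        simp [this]⟩
  rw [discrepancy_congr hN hS hnear, map_add, discrepancy_intCast hdecomp hS, add_zero]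

theorem abs_discrepancy_le (hR : ApproximatesOpenSets R) (hnorm : NormSMulCompat R V)
    (hN : IsLocalVectorMeasure R N) (hM : ∀ D, MeasurableSet D → ‖N D‖ ≤ M) {v : V}
    (hdecomp : ∀ D : Set X, MeasurableSet D → N D v = (μ D).toReal - (ν D).toReal)
    {B : Set X} (hB : MeasurableSet B) {g : R} (hg : ∀ x, 0 ≤ (g : X →ᵇ ℝ) x) :
    |discrepancy R N v μ ν B g| ≤ 10 * M * ‖v‖ + 2 * μ.real B + 2 * ν.real B := by
  set G : X →ᵇ ℝ := (g : X →ᵇ ℝ)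
  obtain ⟨m, hm⟩ : ∃ m : ℕ, ∀ x, G x < m := ⟨⌈‖G‖⌉₊ + 1, fun x => by
    have := (Real.le_norm_self _).trans (G.norm_coe_le_norm x)
    push_cast
    linarith [Nat.le_ceil ‖G‖]⟩
  have hB' : ⋃ i ∈ Finset.range m, slice G B i = B := biUnion_slice G B hg hm
  have hS := measurableSet_slice G B G.continuous.measurable hB
  let τ (i : ℕ) : R := ⟨tent G ((i : ℤ) - 1), tent_mem G _ hR g.2⟩
  have hsplit : discrepancy R N v μ ν B g =
      ∑ i ∈ Finset.range m, discrepancy R N v μ ν (slice G B i) (τ i) := by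
    rw [← Finset.sum_congr rfl fun i _ => discrepancy_slice_eq_tent hR hN hdecomp hB g i,
      ← discrepancy_biUnion hN.sigma_additive hS (pairwise_disjoint_slice G B), hB']
  have hNpart := hN.abs_sum_apply_slice_smul_le hnorm hM hB m (h := τ)
    (fun i => norm_tent_le G _) (fun i => by
      have := tsupport_tent_subset G ((i : ℤ) - 1)
      push_cast at this
      convert this using 3
      ring) v
  have hint (κ : Measure X) [IsFiniteMeasure κ] :
      |∑ i ∈ Finset.range m, ∫ x in slice G B i, (τ i : X →ᵇ ℝ) x ∂κ| ≤ 2 * κ.real B := by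
    simpa only [hB'] using abs_sum_setIntegral_le κ (Finset.range m) hS
      (pairwise_disjoint_slice G B) (h := fun i => (τ i : X →ᵇ ℝ)) fun i _ => norm_tent_le G _
  rw [hsplit]
  simp only [discrepancy_apply, Finset.sum_sub_distrib]
  refine ((abs_sub _ _).trans (add_le_add le_rfl (abs_sub _ _))).trans ?_
  linarith [hint μ, hint ν]

end Estimates

theorem statement7_general {X : Type*} [MetricSpace X] [MeasurableSpace X] [BorelSpace X]
    {V : Type*} [NormedAddCommGroup V] [NormedSpace ℝ V]
    (R : Subring (X →ᵇ ℝ)) [Module R V]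
    (hR : ApproximatesOpenSets R) (hnorm : NormSMulCompat R V)
    (N : Set X → V →L[ℝ] ℝ) (hN : IsLocalVectorMeasure R N)
    (f : ↥R) (v : V) (B : Set X) (hB : MeasurableSet B)
    (μ ν : Measure X) (hμ : IsFiniteMeasure μ) (hν : IsFiniteMeasure ν)
    (hdecomp : ∀ D : Set X, MeasurableSet D → N D v = (μ D).toReal - (ν D).toReal) :
    N B (f • v) = (∫ x in B, (f : X →ᵇ ℝ) x ∂μ) - ∫ x in B, (f : X →ᵇ ℝ) x ∂ν := by
  obtain ⟨M, hM⟩ := hN.sigma_additive.exists_bound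
  rw [← sub_eq_zero, ← discrepancy_apply]
  set k : ℤ := ⌈‖(f : X →ᵇ ℝ)‖⌉
  have hshift : discrepancy R N v μ ν B (f + k) = discrepancy R N v μ ν B f := by
    rw [map_add, discrepancy_intCast hdecomp hB, add_zero]
  have hpos (x : X) : 0 ≤ ((f + k : R) : X →ᵇ ℝ) x := by
    have : |(f : X →ᵇ ℝ) x| ≤ ‖(f : X →ᵇ ℝ)‖ := (f : X →ᵇ ℝ).norm_coe_le_norm x
    simp only [Subring.coe_add, Subring.coe_intCast, BoundedContinuousFunction.add_apply,
      BoundedContinuousFunction.intCast_apply]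
    linarith [neg_abs_le ((f : X →ᵇ ℝ) x), Int.le_ceil ‖(f : X →ᵇ ℝ)‖]
  refine eq_zero_of_forall_abs_nat_mul_le
    (C := 10 * M * ‖v‖ + 2 * μ.real B + 2 * ν.real B) fun n => ?_
  rw [← hshift, ← nsmul_eq_mul, ← map_nsmul]
  exact abs_discrepancy_le hR hnorm hN hM hdecomp hB fun x => by
    simpa [mul_add] using mul_nonneg n.cast_nonneg (hpos x)

/-- for a local vector measure `N` on `V`, `f ∈ R`, `v ∈ V` and `B` Borel,
`N(B)(f v) = ∫_B f d(v·N)`, where the integral against the finite signed measure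
`v·N : B ↦ N(B)(v)` is expressed through any Jordan-type decomposition `v·N = μ - ν`
into finite (positive) measures. -/
theorem statement7 {X : Type*} [MetricSpace X] [CompleteSpace X]
    [TopologicalSpace.SeparableSpace X] [MeasurableSpace X] [BorelSpace X]
    {V : Type*} [NormedAddCommGroup V] [NormedSpace ℝ V]
    (R : Subring (X →ᵇ ℝ)) [Module R V]
    (hR : ApproximatesOpenSets R) (hconst : ConstSMulCompat R V) (hnorm : NormSMulCompat R V)
    (N : Set X → V →L[ℝ] ℝ) (hN : IsLocalVectorMeasure R N)
    (f : ↥R) (v : V) (B : Set X) (hB : MeasurableSet B)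
    (μ ν : Measure X) (hμ : IsFiniteMeasure μ) (hν : IsFiniteMeasure ν)
    (hdecomp : ∀ D : Set X, MeasurableSet D → N D v = (μ D).toReal - (ν D).toReal) :
    N B (f • v) = (∫ x in B, (f : X →ᵇ ℝ) x ∂μ) - ∫ x in B, (f : X →ᵇ ℝ) x ∂ν :=
  statement7_general R hR hnorm N hN f v B hB μ ν hμ hν hdecomp
end
end

section
/- Let X be a Polish space, R ⊆ C_b(X) a subring that approximates open sets and V a normed R-module in which every element has compact support, i.e. for each v ∈ V there exists a compact set K ⊆ X with supp v ⊆ K (meaning ‖v‖_{|X∖K} = 0). Then every continuous linear functional F ∈ V' is tight with respect to R. -/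
open BoundedContinuousFunction Filter Topology Set MeasureTheory ENNReal

noncomputable section

/-!
If `v` is supported in the compact set `K`, then `f • v` depends only on `f` near `K`: when
`f < δ` on `K`, the difference `f - min f δ` is supported in the closed set `{δ ≤ f}`, which
misses `K`, so `f • v = (min f δ) • v` has norm at most `δ ‖v‖`. By Dini's theorem a decreasing
sequence `f n → 0` is eventually below every `δ > 0` on `K`, so `f n • v → 0` in `V`, and
`F (f n • v) → 0` by continuity of `F`.
-/

namespace NormSMulCompat

variable {X : Type*} [TopologicalSpace X] {R : Subring (X →ᵇ ℝ)}
  {V : Type*} [NormedAddCommGroup V] [Module R V]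

theorem norm_smul_le (hnorm : NormSMulCompat R V) (g : R) (v : V) :
    ‖g • v‖ ≤ ‖(g : X →ᵇ ℝ)‖ * ‖v‖ := by
  simpa using hnorm {0} (fun _ => g) (fun _ => v) _ _ (norm_nonneg _) (norm_nonneg v)
    (by simp) (by simp) (by simp)

theorem norm_smul_le_locNorm (hnorm : NormSMulCompat R V) {A : Set X} {g : R}
    (hgA : tsupport (g : X →ᵇ ℝ) ⊆ A) (hg : ‖(g : X →ᵇ ℝ)‖ ≤ 1) (v : V) :
    ‖g • v‖ ≤ locNorm R A v := by
  refine le_csSup ⟨‖v‖, ?_⟩ ⟨g, hgA, hg, rfl⟩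
  rintro _ ⟨h, -, hh, rfl⟩
  simpa using (hnorm.norm_smul_le h v).trans (mul_le_mul_of_nonneg_right hh (norm_nonneg v))

theorem norm_smul_le_mul_locNorm [NormedSpace ℝ V] (hnorm : NormSMulCompat R V)
    (hconst : ConstSMulCompat R V) (hconst_mem : ∀ c : ℝ, const X c ∈ R) {A : Set X} {g : R}
    (hgA : tsupport (g : X →ᵇ ℝ) ⊆ A) (v : V) :
    ‖g • v‖ ≤ ‖(g : X →ᵇ ℝ)‖ * locNorm R A v := by
  rcases eq_or_ne (g : X →ᵇ ℝ) 0 with hg | hg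
  · simp [show g = 0 from Subtype.ext hg]
  set c := ‖(g : X →ᵇ ℝ)‖⁻¹
  have hc : 0 < c := inv_pos.2 (norm_pos_iff.2 hg)
  set g' : R := ⟨const X c, hconst_mem c⟩ * g
  have hg'A : tsupport (g' : X →ᵇ ℝ) ⊆ A :=
    (tsupport_mul_subset_right (f := ⇑(const X c))).trans hgA
  have hg'_norm : ‖(g' : X →ᵇ ℝ)‖ ≤ 1 := calc
    ‖(g' : X →ᵇ ℝ)‖ ≤ ‖const X c‖ * ‖(g : X →ᵇ ℝ)‖ := norm_mul_le _ _
    _ ≤ c * ‖(g : X →ᵇ ℝ)‖ := by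
      gcongr; simpa [abs_of_pos hc] using norm_const_le (α := X) c
    _ = 1 := inv_mul_cancel₀ (norm_ne_zero_iff.2 hg)
  have hg'v : g' • v = c • g • v := by rw [mul_smul, hconst]
  calc ‖g • v‖ = ‖(g : X →ᵇ ℝ)‖ * ‖g' • v‖ := by
        rw [hg'v, norm_smul c (g • v), Real.norm_of_nonneg hc.le, ← mul_assoc,
          mul_inv_cancel₀ (norm_ne_zero_iff.2 hg), one_mul]
    _ ≤ ‖(g : X →ᵇ ℝ)‖ * locNorm R A v := by
        gcongr; exact hnorm.norm_smul_le_locNorm hg'A hg'_norm v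

end NormSMulCompat

section Tightness

variable {X : Type*} [TopologicalSpace X] {R : Subring (X →ᵇ ℝ)}
  {V : Type*} [NormedAddCommGroup V] [NormedSpace ℝ V] [Module R V]

theorem smul_eq_smul_of_locNorm_eq_zero (hnorm : NormSMulCompat R V)
    (hconst : ConstSMulCompat R V) (hconst_mem : ∀ c : ℝ, const X c ∈ R) {A : Set X} {v : V}
    (hv : locNorm R A v = 0) {f g : R} (hfg : tsupport ((f - g : R) : X →ᵇ ℝ) ⊆ A) :
    f • v = g • v := by
  rw [← sub_eq_zero, ← sub_smul, ← norm_le_zero_iff]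
  simpa [hv] using hnorm.norm_smul_le_mul_locNorm hconst hconst_mem hfg v

theorem norm_smul_le_of_forall_lt_on (hR : ApproximatesOpenSets R) (hnorm : NormSMulCompat R V)
    (hconst : ConstSMulCompat R V) {K : Set X} {v : V} (hv : locNorm R Kᶜ v = 0) {f : R}
    (hf : ∀ x, 0 ≤ (f : X →ᵇ ℝ) x) {δ : ℝ} (hδ : 0 ≤ δ)
    (hfK : ∀ x ∈ K, (f : X →ᵇ ℝ) x < δ) : ‖f • v‖ ≤ δ * ‖v‖ := by
  obtain ⟨h, hhR, hh⟩ := hR.inf_mem f (const X δ) f.2 (hR.const_mem δ)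
  set g : R := ⟨h, hhR⟩
  have hfg : tsupport ((f - g : R) : X →ᵇ ℝ) ⊆ Kᶜ := by
    refine (closure_minimal ?_ (isClosed_le continuous_const (map_continuous (f : X →ᵇ ℝ)))).trans
      fun x hx hxK => (hfK x hxK).not_ge hx
    intro x hx
    show δ ≤ (f : X →ᵇ ℝ) x
    by_contra! hlt
    exact hx (by simp [g, hh x, hlt.le])
  have hg : ‖(g : X →ᵇ ℝ)‖ ≤ δ := (norm_le hδ).2 fun x => by
    simpa [g, hh x, abs_le, hδ] using (neg_nonpos.2 hδ).trans (hf x)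
  calc ‖f • v‖ = ‖g • v‖ := by
        rw [smul_eq_smul_of_locNorm_eq_zero hnorm hconst hR.const_mem hv hfg]
    _ ≤ ‖(g : X →ᵇ ℝ)‖ * ‖v‖ := hnorm.norm_smul_le g v
    _ ≤ δ * ‖v‖ := by gcongr

theorem tendsto_smul_nhds_zero (hR : ApproximatesOpenSets R) (hnorm : NormSMulCompat R V)
    (hconst : ConstSMulCompat R V) {K : Set X} (hK : IsCompact K) {v : V}
    (hv : locNorm R Kᶜ v = 0) {f : ℕ → R} (hanti : ∀ x, Antitone fun n => (f n : X →ᵇ ℝ) x)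
    (hf : ∀ x, Tendsto (fun n => (f n : X →ᵇ ℝ) x) atTop (𝓝 0)) :
    Tendsto (fun n => f n • v) atTop (𝓝 0) := by
  have hunif : TendstoUniformlyOn (fun n x => (f n : X →ᵇ ℝ) x) 0 atTop K :=
    Antitone.tendstoUniformlyOn_of_forall_tendsto hK (fun n => (map_continuous _).continuousOn)
      (fun x _ => hanti x) continuousOn_const (fun x _ => hf x)
  rw [NormedAddGroup.tendsto_nhds_zero]
  intro ε hε
  set δ := ε / (‖v‖ + 1)
  have hδ : 0 < δ := by positivity
  filter_upwards [Metric.tendstoUniformlyOn_iff.1 hunif δ hδ] with n hn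
  have hfK : ∀ x ∈ K, (f n : X →ᵇ ℝ) x < δ := fun x hx =>
    (le_abs_self _).trans_lt (by simpa using hn x hx)
  calc ‖f n • v‖ ≤ δ * ‖v‖ := norm_smul_le_of_forall_lt_on hR hnorm hconst hv
        (fun x => (hanti x).le_of_tendsto (hf x) n) hδ.le hfK
    _ < δ * (‖v‖ + 1) := by gcongr; linarith
    _ = ε := div_mul_cancel₀ _ (by positivity)

end Tightness

theorem statement11_general {X : Type*} [MetricSpace X]
    {V : Type*} [NormedAddCommGroup V] [NormedSpace ℝ V]
    (R : Subring (X →ᵇ ℝ)) [Module R V]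
    (hR : ApproximatesOpenSets R) (hconst : ConstSMulCompat R V) (hnorm : NormSMulCompat R V)
    (hsupp : ∀ v : V, ∃ K : Set X, IsCompact K ∧ locNorm R Kᶜ v = 0)
    (F : V →L[ℝ] ℝ) : IsTight R F := by
  intro v f hanti htend
  obtain ⟨K, hK, hv⟩ := hsupp v
  simpa only [Function.comp_def, map_zero] using (F.continuous.tendsto 0).comp
    (tendsto_smul_nhds_zero hR hnorm hconst hK hv hanti htend)

/-- if every element of the normed `R`-module `V` has compact support,
then every `F ∈ V'` is tight with respect to `R`. -/
theorem statement11 {X : Type*} [MetricSpace X] [CompleteSpace X]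
    [TopologicalSpace.SeparableSpace X]
    {V : Type*} [NormedAddCommGroup V] [NormedSpace ℝ V]
    (R : Subring (X →ᵇ ℝ)) [Module R V]
    (hR : ApproximatesOpenSets R) (hconst : ConstSMulCompat R V) (hnorm : NormSMulCompat R V)
    (hsupp : ∀ v : V, ∃ K : Set X, IsCompact K ∧ locNorm R Kᶜ v = 0)
    (F : V →L[ℝ] ℝ) : IsTight R F :=
  statement11_general R hR hconst hnorm hsupp F
end
end
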